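/- Let p be an odd prime and let 𝐬 = ((s_1,ε_1),…,(s_d,ε_d)) be a signed composition, with reversal rev(𝐬) = ((s_d,ε_d),…,(s_1,ε_1)). For 1 ≤ i ≤ d let 𝐬⊕e_i be the signed composition obtained from 𝐬 by replacing (s_i,ε_i) with (s_i+1,ε_i). Then (−1)^{|𝐬|} sgn(𝐬) H_{p−1}(rev(𝐬)) ≡ H_{p−1}(𝐬) + p·Σ_{i=1}^d s_i·H_{p−1}(𝐬⊕e_i) (mod p²), and (−1)^{|𝐬|} sgn(𝐬) H^⋆_{p−1}(rev(𝐬)) ≡ H^⋆_{p−1}(𝐬) + p·Σ_{i=1}^d s_i·H^⋆_{p−1}(𝐬⊕e_i) (mod p²). -/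

import Mathlib

open scoped BigOperators

/-- Alternating multiple harmonic sum `H_n(𝐬)` where `𝐬` is a list of pairs
`(sⱼ, εⱼ)` (exponent, sign):
`H_n(𝐬) = Σ_{n ≥ k₁ > ⋯ > k_d ≥ 1} Π εⱼ^{kⱼ} / kⱼ^{sⱼ}`. -/
def AMHS : ℕ → List (ℕ × ℚ) → ℚ
  | _, [] => 1
  | n, (s, ε) :: t => ∑ k ∈ Finset.Icc 1 n, ε ^ k / (k : ℚ) ^ s * AMHS (k - 1) t

/-- Alternating multiple harmonic star sum `H⋆_n(𝐬)` (indices weakly decreasing). -/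
def AMHSstar : ℕ → List (ℕ × ℚ) → ℚ
  | _, [] => 1
  | n, (s, ε) :: t => ∑ k ∈ Finset.Icc 1 n, ε ^ k / (k : ℚ) ^ s * AMHSstar k t

/-- A list of pairs is a signed composition: positive exponents, signs `±1`. -/
def IsSignedComp (l : List (ℕ × ℚ)) : Prop := ∀ x ∈ l, 0 < x.1 ∧ (x.2 = 1 ∨ x.2 = -1)

/-- `a ≡ b (mod p^ℓ)` for rationals: the `p`-adic valuation of `a - b` is at least `ℓ`. -/
def RatModEq (p ℓ : ℕ) (a b : ℚ) : Prop := a = b ∨ (ℓ : ℤ) ≤ padicValRat p (a - b)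

/-- View a composition of positive integers as a signed composition with all signs `+1`. -/
def posComp (l : List ℕ) : List (ℕ × ℚ) := l.map (fun s => (s, 1))

/-!
Substituting `k ↦ p - k` turns the sum over `p - 1 ≥ k_d > ⋯ > k_1 ≥ 1` defining
`H_{p-1}(rev 𝐬)` into one over `p - 1 ≥ k_1 > ⋯ > k_d ≥ 1` whose factors are
`ε^(p-k) / (p-k)^s = (-1)^s ε · ε^k / (k - p)^s`, and `1 / (k - p)^s ≡ 1/k^s + s p / k^(s+1)`
modulo `p²`. Expanding the product of these factors to first order in `p` produces the
correction `p Σᵢ sᵢ H(𝐬 ⊕ eᵢ)`; every quantity involved is `p`-integral because `p ∤ k`.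
-/

open Finset

section IterSum

variable {R : Type*} [CommSemiring R]

/-- `iterSum δ [f₁, …, f_d] n m = Σ f₁ k₁ ⋯ f_d k_d` over `n ≥ k₁`, `k_j ≥ k_{j+1} + δ` and
`k_d ≥ m`; since `k - δ` truncates, the lemmas below assume `1 ≤ m`. -/
def iterSum (δ : ℕ) : List (ℕ → R) → ℕ → ℕ → R
  | [], _, _ => 1
  | f :: fs, n, m => ∑ k ∈ Icc m n, f k * iterSum δ fs (k - δ) m

theorem iterSum_append_singleton (δ : ℕ) (fs : List (ℕ → R)) (f : ℕ → R) {m : ℕ}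
    (hm : 1 ≤ m) (n : ℕ) :
    iterSum δ (fs ++ [f]) n m = ∑ k ∈ Icc m n, f k * iterSum δ fs n (k + δ) := by
  induction fs generalizing n with
  | nil => simp [iterSum]
  | cons g fs ih =>
    simp only [List.cons_append, iterSum, ih, mul_sum]
    rw [sum_comm' (t' := Icc m n) (s' := fun k => Icc (k + δ) n)
      (by intro j k; simp only [mem_Icc]; omega)]
    exact sum_congr rfl fun k _ => sum_congr rfl fun j _ => by ring

theorem iterSum_reverse (δ N : ℕ) (fs : List (ℕ → R)) {m n : ℕ} (hm : 1 ≤ m)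
    (hn : n < N) :
    iterSum δ fs.reverse n m = iterSum δ (fs.map fun f k => f (N - k)) (N - m) (N - n) := by
  induction fs generalizing m with
  | nil => rfl
  | cons f fs ih =>
    rw [List.reverse_cons, iterSum_append_singleton δ _ f hm, List.map_cons, iterSum]
    refine sum_nbij' (N - ·) (N - ·) ?_ ?_ ?_ ?_ ?_ <;> intro k hk <;>
      simp only [mem_Icc] at hk ⊢
    any_goals omega
    rw [ih (by omega), Nat.sub_sub_self (by omega), Nat.sub_sub]

theorem iterSum_map_mul {α : Type*} (δ : ℕ) (l : List α) (c : α → R) (F : α → ℕ → R)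
    (n m : ℕ) :
    iterSum δ (l.map fun a k => c a * F a k) n m = (l.map c).prod * iterSum δ (l.map F) n m := by
  induction l generalizing n with
  | nil => simp [iterSum]
  | cons a l ih =>
    simp only [List.map_cons, iterSum, ih, List.prod_cons, mul_sum]
    exact sum_congr rfl fun k _ => by ring

theorem iterSum_set_mul (δ : ℕ) (fs : List (ℕ → R)) (i : ℕ) (c : R) (f : ℕ → R)
    (n m : ℕ) (hi : i < fs.length) :
    iterSum δ (fs.set i fun k => c * f k) n m = c * iterSum δ (fs.set i f) n m := by
  induction fs generalizing i n with
  | nil => simp at hi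
  | cons g fs ih =>
    cases i with
    | zero =>
      simp only [List.set_cons_zero, iterSum, mul_sum]
      exact sum_congr rfl fun k _ => by ring
    | succ i =>
      simp only [List.set_cons_succ, iterSum, mul_sum, ih i _ (by simpa using hi)]
      exact sum_congr rfl fun k _ => by ring

theorem sum_iterSum_set_cons {α : Type*} (δ : ℕ) (g h : α → ℕ → R) (a : α)
    (l : List α) (n m : ℕ) :
    ∑ i : Fin (a :: l).length, iterSum δ (((a :: l).map g).set i (h ((a :: l).get i))) n m =
      ∑ k ∈ Icc m n, (h a k * iterSum δ (l.map g) (k - δ) m +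
        g a k * ∑ i : Fin l.length, iterSum δ ((l.map g).set i (h (l.get i))) (k - δ) m) := by
  simp only [List.length_cons, Fin.sum_univ_succ, Fin.val_zero, Fin.val_succ, List.get_cons_zero,
    List.map_cons, List.set_cons_zero, List.set_cons_succ, iterSum, mul_sum, sum_add_distrib]
  rw [sum_comm]
  rfl

end IterSum

theorem mul_pow_sub_of_sq_eq_one {M : Type*} [CommMonoid M] {ε : M} (hε : ε ^ 2 = 1) {p k : ℕ}
    (hp : Odd p) (hk : k ≤ p) : ε * ε ^ (p - k) = ε ^ k := by
  have hεp : ε ^ p = ε := by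
    obtain ⟨m, rfl⟩ := hp
    rw [pow_succ, pow_mul, hε, one_pow, one_mul]
  calc ε * ε ^ (p - k) = ε * ε ^ (p - k) * (ε ^ 2) ^ k := by rw [hε, one_pow, mul_one]
    _ = ε * ε ^ (p - k + k) * ε ^ k := by rw [pow_add, ← pow_mul, pow_mul', sq]; ac_rfl
    _ = ε ^ k := by rw [Nat.sub_add_cancel hk, hεp, ← sq, hε, one_mul]

theorem pow_sum_fst_mul_prod_snd {M : Type*} [CommMonoid M] (a : M) (l : List (ℕ × M)) :
    a ^ (l.map Prod.fst).sum * (l.map Prod.snd).prod = (l.map fun x => a ^ x.1 * x.2).prod := by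
  induction l with
  | nil => simp
  | cons x l ih =>
    simp only [List.map_cons, List.sum_cons, List.prod_cons, pow_add, ← ih, mul_mul_mul_comm]

def amhsTerm (x : ℕ × ℚ) (k : ℕ) : ℚ := x.2 ^ k / (k : ℚ) ^ x.1

theorem AMHS_eq_iterSum (l : List (ℕ × ℚ)) (n : ℕ) :
    AMHS n l = iterSum 1 (l.map amhsTerm) n 1 := by
  induction l generalizing n with
  | nil => rfl
  | cons x l ih => simp [AMHS, iterSum, amhsTerm, ih]

theorem AMHSstar_eq_iterSum (l : List (ℕ × ℚ)) (n : ℕ) :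
    AMHSstar n l = iterSum 0 (l.map amhsTerm) n 1 := by
  induction l generalizing n with
  | nil => rfl
  | cons x l ih => simp [AMHSstar, iterSum, amhsTerm, ih]

section Padic

variable {p : ℕ}

theorem RatModEq.refl {ℓ : ℕ} (a : ℚ) : RatModEq p ℓ a a := Or.inl rfl

variable [hp : Fact p.Prime]

theorem padicNorm_natCast_pow_le_one (ℓ : ℕ) : padicNorm p ((p : ℚ) ^ ℓ) ≤ 1 := by
  exact_mod_cast padicNorm.of_nat (p := p) (p ^ ℓ)

theorem ratModEq_iff_padicNorm_le {ℓ : ℕ} {a b : ℚ} :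
    RatModEq p ℓ a b ↔ padicNorm p (a - b) ≤ padicNorm p ((p : ℚ) ^ ℓ) := by
  have hp1 : (1 : ℚ) < p := by exact_mod_cast hp.out.one_lt
  have hpℓ : (p : ℚ) ^ ℓ ≠ 0 := pow_ne_zero _ (by positivity)
  by_cases hab : a = b
  · simp [RatModEq, hab, padicNorm.nonneg]
  rw [padicNorm.eq_zpow_of_nonzero (sub_ne_zero.mpr hab), padicNorm.eq_zpow_of_nonzero hpℓ,
    padicValRat.pow, padicValRat.self hp.out.one_lt,
    zpow_le_zpow_iff_right₀ hp1]
  simp [RatModEq, hab]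

namespace RatModEq

variable {ℓ : ℕ}

theorem trans {a b c : ℚ} (hab : RatModEq p ℓ a b) (hbc : RatModEq p ℓ b c) :
    RatModEq p ℓ a c := by
  rw [ratModEq_iff_padicNorm_le] at *
  rw [← sub_add_sub_cancel a b c]
  exact padicNorm.nonarchimedean.trans (max_le hab hbc)

instance : Trans (RatModEq p ℓ) (RatModEq p ℓ) (RatModEq p ℓ) := ⟨trans⟩

theorem sum {ι : Type*} {S : Finset ι} {a b : ι → ℚ}
    (h : ∀ i ∈ S, RatModEq p ℓ (a i) (b i)) :
    RatModEq p ℓ (∑ i ∈ S, a i) (∑ i ∈ S, b i) := by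
  simp only [ratModEq_iff_padicNorm_le, ← sum_sub_distrib] at *
  exact padicNorm.sum_le' h (padicNorm.nonneg _)

theorem mul {a a' b b' : ℚ} (ha : RatModEq p ℓ a a') (hb : RatModEq p ℓ b b')
    (ha' : padicNorm p a' ≤ 1) (hb' : padicNorm p b' ≤ 1) :
    RatModEq p ℓ (a * b) (a' * b') := by
  rw [ratModEq_iff_padicNorm_le] at *
  have hq := padicNorm_natCast_pow_le_one (p := p) ℓ
  have h1 : padicNorm p ((a - a') * (b - b')) ≤ padicNorm p ((p : ℚ) ^ ℓ) := by
    rw [padicNorm.mul]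
    nlinarith [padicNorm.nonneg (p := p) (a - a'), padicNorm.nonneg (p := p) (b - b')]
  have h2 : padicNorm p (a' * (b - b')) ≤ padicNorm p ((p : ℚ) ^ ℓ) := by
    rw [padicNorm.mul]; nlinarith [padicNorm.nonneg (p := p) (b - b')]
  have h3 : padicNorm p ((a - a') * b') ≤ padicNorm p ((p : ℚ) ^ ℓ) := by
    rw [padicNorm.mul]; nlinarith [padicNorm.nonneg (p := p) (a - a')]
  calc padicNorm p (a * b - a' * b')
      = padicNorm p ((a - a') * (b - b') + a' * (b - b') + (a - a') * b') := by ring_nf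
    _ ≤ padicNorm p ((p : ℚ) ^ ℓ) :=
      padicNorm.nonarchimedean.trans (max_le (padicNorm.nonarchimedean.trans (max_le h1 h2)) h3)

theorem add_pow_mul (a : ℚ) {z : ℚ} (hz : padicNorm p z ≤ 1) :
    RatModEq p ℓ (a + p ^ ℓ * z) a := by
  rw [ratModEq_iff_padicNorm_le, add_sub_cancel_left, padicNorm.mul]
  exact mul_le_of_le_one_right (padicNorm.nonneg _) hz

end RatModEq

theorem padicNorm_add_natCast_mul_le_one {x y : ℚ} (hx : padicNorm p x ≤ 1)
    (hy : padicNorm p y ≤ 1) : padicNorm p (x + p * y) ≤ 1 := by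
  refine padicNorm.nonarchimedean.trans (max_le hx ?_)
  rw [padicNorm.mul]
  exact mul_le_one₀ (padicNorm.of_nat p) (padicNorm.nonneg _) hy

theorem padicNorm_iterSum_le_one (δ N : ℕ) {fs : List (ℕ → ℚ)} {m : ℕ}
    (hfs : ∀ f ∈ fs, ∀ k ∈ Icc m N, padicNorm p (f k) ≤ 1) {n : ℕ} (hn : n ≤ N) :
    padicNorm p (iterSum δ fs n m) ≤ 1 := by
  induction fs generalizing n with
  | nil => simp [iterSum]
  | cons f fs ih =>
    refine padicNorm.sum_le' (fun k hk => ?_) zero_le_one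
    have hkN : k ∈ Icc m N := by simp only [mem_Icc] at hk ⊢; omega
    rw [padicNorm.mul]
    exact mul_le_one₀ (hfs f (by simp) k hkN) (padicNorm.nonneg _)
      (ih (fun g hg => hfs g (by simp [hg])) (by simp only [mem_Icc] at hk; omega))

theorem iterSum_map_ratModEq {α : Type*} (δ N : ℕ) {l : List α} {f g h : α → ℕ → ℚ}
    {m : ℕ} (hf : ∀ a ∈ l, ∀ k ∈ Icc m N, RatModEq p 2 (f a k) (g a k + p * h a k))
    (hg : ∀ a ∈ l, ∀ k ∈ Icc m N, padicNorm p (g a k) ≤ 1)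
    (hh : ∀ a ∈ l, ∀ k ∈ Icc m N, padicNorm p (h a k) ≤ 1) {n : ℕ} (hn : n ≤ N) :
    RatModEq p 2 (iterSum δ (l.map f) n m) (iterSum δ (l.map g) n m +
      p * ∑ i : Fin l.length, iterSum δ ((l.map g).set i (h (l.get i))) n m) := by
  induction l generalizing n with
  | nil => simpa [iterSum] using RatModEq.refl 1
  | cons a t ih =>
    have hgt : ∀ g' ∈ t.map g, ∀ k ∈ Icc m N, padicNorm p (g' k) ≤ 1 := by
      simp only [List.mem_map]
      rintro _ ⟨b, hb, rfl⟩
      exact hg b (by simp [hb])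
    rw [sum_iterSum_set_cons, List.map_cons, List.map_cons, iterSum, iterSum, mul_sum,
      ← sum_add_distrib]
    refine RatModEq.sum fun k hk => ?_
    have hkN : k ∈ Icc m N := by simp only [mem_Icc] at hk ⊢; omega
    have hkδ : k - δ ≤ N := by simp only [mem_Icc] at hk; omega
    set G := iterSum δ (t.map g) (k - δ) m
    set D := ∑ i : Fin t.length, iterSum δ ((t.map g).set i (h (t.get i))) (k - δ) m
    have hG : padicNorm p G ≤ 1 := padicNorm_iterSum_le_one δ N hgt hkδ
    have hD : padicNorm p D ≤ 1 := by
      refine padicNorm.sum_le' (fun i _ => padicNorm_iterSum_le_one δ N (fun g' hg' => ?_) hkδ)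
        zero_le_one
      rcases List.mem_or_eq_of_mem_set hg' with hg' | rfl
      · exact hgt g' hg'
      · exact hh _ (List.mem_cons_of_mem a (List.get_mem t i))
    have hgk := hg a List.mem_cons_self k hkN
    have hhk := hh a List.mem_cons_self k hkN
    calc RatModEq p 2 (f a k * iterSum δ (t.map f) (k - δ) m)
          ((g a k + p * h a k) * (G + p * D)) :=
          RatModEq.mul (hf a List.mem_cons_self k hkN)
            (ih (fun b hb => hf b (List.mem_cons_of_mem a hb))
              (fun b hb => hg b (List.mem_cons_of_mem a hb))
              (fun b hb => hh b (List.mem_cons_of_mem a hb)) hkδ)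
            (padicNorm_add_natCast_mul_le_one hgk hhk) (padicNorm_add_natCast_mul_le_one hG hD)
      _ = g a k * G + p * (h a k * G + g a k * D) + p ^ 2 * (h a k * D) := by ring
      RatModEq p 2 _ (g a k * G + p * (h a k * G + g a k * D)) :=
          RatModEq.add_pow_mul _
            (by rw [padicNorm.mul]; exact mul_le_one₀ hhk (padicNorm.nonneg _) hD)

theorem one_div_sub_pow_ratModEq {k : ℤ} (hk : ¬(p : ℤ) ∣ k) (s : ℕ) :
    RatModEq p 2 (1 / ((k : ℚ) - p) ^ s) (1 / (k : ℚ) ^ s + p * (s / (k : ℚ) ^ (s + 1))) := by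
  cases s with
  | zero => simpa using RatModEq.refl 1
  | succ t =>
    obtain ⟨c, hc⟩ := sq_dvd_add_pow_sub_sub (-(p : ℤ)) k (t + 1)
    have hpZ : Prime (p : ℤ) := Nat.prime_iff_prime_int.mp hp.out
    have hkp : ¬(p : ℤ) ∣ k - p := fun h => hk (by simpa using h.add (dvd_refl (p : ℤ)))
    have hw : ¬(p : ℤ) ∣ k ^ (t + 2) * (k - p) ^ (t + 1) := by
      rintro hdvd
      rcases hpZ.dvd_mul.mp hdvd with h | h
      exacts [hk (hpZ.dvd_of_dvd_pow h), hkp (hpZ.dvd_of_dvd_pow h)]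
    have hcq : ((k : ℚ) - p) ^ (t + 1) = k ^ (t + 1) - (t + 1) * p * k ^ t + p ^ 2 * c := by
      have := congrArg (Int.cast : ℤ → ℚ) hc
      push_cast at this
      linear_combination this
    have key : 1 / ((k : ℚ) - p) ^ (t + 1) =
        1 / (k : ℚ) ^ (t + 1) + p * ((t + 1 : ℕ) / (k : ℚ) ^ (t + 1 + 1)) +
        p ^ 2 * ((((t + 1) ^ 2 * k ^ t - k * c - p * (t + 1) * c : ℤ) : ℚ) /
          ((k ^ (t + 2) * (k - p) ^ (t + 1) : ℤ) : ℚ)) := by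
      have hk0 : (k : ℚ) ≠ 0 := by exact_mod_cast fun h : k = 0 => hk (h ▸ dvd_zero _)
      have hkp0 : (k : ℚ) - p ≠ 0 := by
        exact_mod_cast fun h : k - p = 0 => hkp (h ▸ dvd_zero _)
      push_cast
      field_simp
      linear_combination -(k : ℚ) ^ (t + 1) * (k + p * (t + 1)) * hcq
    rw [key]
    refine RatModEq.add_pow_mul _ ?_
    rw [padicNorm.div, (padicNorm.int_eq_one_iff _).mpr hw, div_one]
    exact padicNorm.of_int _

theorem padicNorm_div_natCast_pow_le_one {a : ℚ} (ha : padicNorm p a ≤ 1) {k : ℕ}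
    (hk : ¬p ∣ k) (s : ℕ) : padicNorm p (a / (k : ℚ) ^ s) ≤ 1 := by
  rwa [padicNorm.div, IsAbsoluteValue.abv_pow (padicNorm p), (padicNorm.nat_eq_one_iff k).mpr hk,
    one_pow, div_one]

theorem padicNorm_sign_pow {ε : ℚ} (hε : ε = 1 ∨ ε = -1) (k : ℕ) :
    padicNorm p (ε ^ k) = 1 := by
  rcases hε with rfl | rfl <;> simp

theorem padicNorm_amhsTerm_le_one {x : ℕ × ℚ} (hx : x.2 = 1 ∨ x.2 = -1) {k : ℕ}
    (hk : ¬p ∣ k) : padicNorm p (amhsTerm x k) ≤ 1 :=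
  padicNorm_div_natCast_pow_le_one (padicNorm_sign_pow hx k).le hk _

theorem amhsTerm_reflect_ratModEq (hodd : Odd p) {x : ℕ × ℚ} (hx : x.2 = 1 ∨ x.2 = -1)
    {k : ℕ} (hk : k ∈ Icc 1 (p - 1)) :
    RatModEq p 2 ((-1) ^ x.1 * x.2 * amhsTerm x (p - k))
      (amhsTerm x k + p * (x.1 * amhsTerm (x.1 + 1, x.2) k)) := by
  obtain ⟨s, ε⟩ := x
  simp only [mem_Icc] at hk
  have hpk : ¬p ∣ k := Nat.not_dvd_of_pos_of_lt (by omega) (by omega)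
  have hε : ε * ε ^ (p - k) = ε ^ k :=
    mul_pow_sub_of_sq_eq_one (by rcases hx with rfl | rfl <;> norm_num) hodd (by omega)
  have hlhs :
      (-1) ^ s * ε * amhsTerm (s, ε) (p - k) = ε ^ k * (1 / (((k : ℤ) : ℚ) - p) ^ s) := by
    have hneg : ((p - k : ℕ) : ℚ) ^ s = (-1) ^ s * ((k : ℚ) - p) ^ s := by
      rw [Nat.cast_sub (by omega), ← mul_pow]; ring
    simp only [amhsTerm, hneg, Int.cast_natCast, ← hε]
    field_simp
  have hrhs : amhsTerm (s, ε) k + p * (s * amhsTerm (s + 1, ε) k) =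
      ε ^ k * (1 / ((k : ℤ) : ℚ) ^ s + p * (s / ((k : ℤ) : ℚ) ^ (s + 1))) := by
    simp only [amhsTerm, Int.cast_natCast]; ring
  rw [hlhs, hrhs]
  refine RatModEq.mul (RatModEq.refl _)
    (one_div_sub_pow_ratModEq (by exact_mod_cast hpk) s) ?_ ?_
  · exact (padicNorm_sign_pow hx k).le
  · simp only [Int.cast_natCast]
    exact padicNorm_add_natCast_mul_le_one
      (padicNorm_div_natCast_pow_le_one (by simp) hpk s)
      (padicNorm_div_natCast_pow_le_one (padicNorm.of_nat s) hpk (s + 1))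

theorem iterSum_amhsTerm_reverse_ratModEq (hodd : Odd p) (δ : ℕ) {l : List (ℕ × ℚ)}
    (hl : IsSignedComp l) :
    RatModEq p 2
      ((-1) ^ (l.map Prod.fst).sum * (l.map Prod.snd).prod *
        iterSum δ (l.reverse.map amhsTerm) (p - 1) 1)
      (iterSum δ (l.map amhsTerm) (p - 1) 1 + p * ∑ i : Fin l.length, ((l.get i).1 : ℚ) *
        iterSum δ ((l.set i ((l.get i).1 + 1, (l.get i).2)).map amhsTerm) (p - 1) 1) := by
  have hp1 := hp.out.one_le
  have hpk {k : ℕ} (hk : k ∈ Icc 1 (p - 1)) : ¬p ∣ k := by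
    simp only [mem_Icc] at hk
    exact Nat.not_dvd_of_pos_of_lt (by omega) (by omega)
  rw [List.map_reverse, iterSum_reverse δ p _ le_rfl (by omega), Nat.sub_sub_self hp1,
    List.map_map, pow_sum_fst_mul_prod_snd, ← iterSum_map_mul]
  have hset : ∀ i : Fin l.length, ((l.get i).1 : ℚ) *
      iterSum δ ((l.set i ((l.get i).1 + 1, (l.get i).2)).map amhsTerm) (p - 1) 1 =
      iterSum δ ((l.map amhsTerm).set i
        fun k => (l.get i).1 * amhsTerm ((l.get i).1 + 1, (l.get i).2) k) (p - 1) 1 := by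
    intro i
    rw [iterSum_set_mul _ _ _ _ _ _ _ (by simp), List.map_set]
  simp only [hset]
  refine iterSum_map_ratModEq δ (p - 1) (f := fun x k => (-1) ^ x.1 * x.2 * amhsTerm x (p - k))
    (h := fun x k => x.1 * amhsTerm (x.1 + 1, x.2) k) (fun x hx k hk => ?_)
    (fun x hx k hk => ?_) (fun x hx k hk => ?_) le_rfl
  · exact amhsTerm_reflect_ratModEq hodd (hl x hx).2 hk
  · exact padicNorm_amhsTerm_le_one (hl x hx).2 (hpk hk)
  · rw [padicNorm.mul]
    exact mul_le_one₀ (padicNorm.of_nat _) (padicNorm.nonneg _)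
      (padicNorm_amhsTerm_le_one (x := (x.1 + 1, x.2)) (hl x hx).2 (hpk hk))

end Padic

/-- Theorem `thm:reversal2`: reversal relations mod `p²`.
For an odd prime `p` and a signed composition `𝐬` of depth `d`:
`(-1)^{|𝐬|} sgn(𝐬) H_{p-1}(rev 𝐬) ≡ H_{p-1}(𝐬) + p Σᵢ sᵢ H_{p-1}(𝐬 ⊕ eᵢ) (mod p²)`,
and likewise for `H⋆`, where `𝐬 ⊕ eᵢ` increases the `i`-th exponent by one. -/
theorem reversal_mod_p_sq (p : ℕ) (hp : p.Prime) (hodd : Odd p)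
    (s : List (ℕ × ℚ)) (hs : IsSignedComp s) :
    RatModEq p 2
      ((-1 : ℚ) ^ ((s.map Prod.fst).sum) * (s.map Prod.snd).prod * AMHS (p - 1) s.reverse)
      (AMHS (p - 1) s +
        (p : ℚ) * ∑ i : Fin s.length,
          ((s.get i).1 : ℚ) * AMHS (p - 1) (s.set i ((s.get i).1 + 1, (s.get i).2))) ∧
    RatModEq p 2
      ((-1 : ℚ) ^ ((s.map Prod.fst).sum) * (s.map Prod.snd).prod * AMHSstar (p - 1) s.reverse)
      (AMHSstar (p - 1) s +
        (p : ℚ) * ∑ i : Fin s.length,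
          ((s.get i).1 : ℚ) * AMHSstar (p - 1) (s.set i ((s.get i).1 + 1, (s.get i).2))) := by
  have : Fact p.Prime := ⟨hp⟩
  simp only [AMHS_eq_iterSum, AMHSstar_eq_iterSum]
  exact ⟨iterSum_amhsTerm_reverse_ratModEq hodd 1 hs,
    iterSum_amhsTerm_reverse_ratModEq hodd 0 hs⟩
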